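/- arXiv:1101.3716 — 8 statements merged into one kernel-verified Lean document; each statement's English description precedes it below -/
import Mathlib

section
/- Let $d \geq 1$, let $P$ be a locally finite subset of $\mathbb{R}^d$, and let $G$ be a simple graph with vertex set $P$ that is a stable multi-matching in which every vertex has degree at most $k$. For $x \in P$ let $M_x$ denote the length of the longest edge of $G$ incident to $x$ (and $M_x=0$ if $x$ has no incident edge). Then for every $z \in \mathbb{R}^d$ and every $t > 0$, the set $\{x \in P : |x - z| \leq t/2 \text{ and } M_x > t\}$ has at most $k+1$ elements. -/
/-- `G` is a stable multi-matching on `P ⊆ ℝ^d`: for any two distinct points, either they are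
adjacent, or one of them has no incident edge longer than the distance between them. -/
def IsStableMultiMatchingEuc (d : ℕ) (P : Set (EuclideanSpace ℝ (Fin d)))
    (G : SimpleGraph P) : Prop :=
  ∀ x y : P, x ≠ y →
    G.Adj x y ∨
    (∀ z : P, G.Adj x z → dist (x : EuclideanSpace ℝ (Fin d)) z ≤
      dist (x : EuclideanSpace ℝ (Fin d)) y) ∨
    (∀ z : P, G.Adj y z → dist (y : EuclideanSpace ℝ (Fin d)) z ≤
      dist (x : EuclideanSpace ℝ (Fin d)) y)

/-!
Two points within `t / 2` of `z` are at distance at most `t`, so if both have an incident edge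
longer than `t`, stability forces them to be adjacent. The points in question thus form a clique,
and a clique lies in the closed neighbourhood of any of its members, which has at most `k + 1`
elements.
-/

namespace SimpleGraph

variable {V : Type*} {G : SimpleGraph V} {s : Set V}

theorem IsClique.subset_insert_neighborSet (hs : G.IsClique s) {x : V} (hx : x ∈ s) :
    s ⊆ Insert.insert x (G.neighborSet x) := by
  intro y hy
  rcases eq_or_ne x y with rfl | hne
  · exact Set.mem_insert _ _
  · exact Set.mem_insert_of_mem _ (hs hx hy hne)

theorem IsClique.finite_and_ncard_le_succ {k : ℕ} (hfin : ∀ x, (G.neighborSet x).Finite)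
    (hdeg : ∀ x, (G.neighborSet x).ncard ≤ k) (hs : G.IsClique s) :
    s.Finite ∧ s.ncard ≤ k + 1 := by
  rcases s.eq_empty_or_nonempty with rfl | ⟨x, hx⟩
  · simp
  have hsub := hs.subset_insert_neighborSet hx
  refine ⟨((hfin x).insert x).subset hsub, ?_⟩
  calc s.ncard ≤ (Insert.insert x (G.neighborSet x)).ncard :=
        Set.ncard_le_ncard hsub ((hfin x).insert x)
    _ ≤ (G.neighborSet x).ncard + 1 := Set.ncard_insert_le _ _
    _ ≤ k + 1 := Nat.add_le_add_right (hdeg x) 1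

end SimpleGraph

namespace IsStableMultiMatchingEuc

variable {d : ℕ} {P : Set (EuclideanSpace ℝ (Fin d))} {G : SimpleGraph P}

theorem adj_of_dist_lt (h : IsStableMultiMatchingEuc d P G) {x y u v : P} (hxy : x ≠ y)
    (hxu : G.Adj x u) (hyv : G.Adj y v)
    (hu : dist (x : EuclideanSpace ℝ (Fin d)) y < dist (x : EuclideanSpace ℝ (Fin d)) u)
    (hv : dist (x : EuclideanSpace ℝ (Fin d)) y < dist (y : EuclideanSpace ℝ (Fin d)) v) :
    G.Adj x y := by
  rcases h x y hxy with hadj | hx | hy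
  · exact hadj
  · exact absurd (hx u hxu) (not_le.mpr hu)
  · exact absurd (hy v hyv) (not_le.mpr hv)

theorem isClique_long_edge_points_near (h : IsStableMultiMatchingEuc d P G)
    (z : EuclideanSpace ℝ (Fin d)) (t : ℝ) :
    G.IsClique {x : P | dist (x : EuclideanSpace ℝ (Fin d)) z ≤ t / 2 ∧
        ∃ y : P, G.Adj x y ∧ t < dist (x : EuclideanSpace ℝ (Fin d)) y} := by
  rintro x ⟨hxz, u, hxu, hu⟩ x' ⟨hx'z, v, hx'v, hv⟩ hne
  have hxx' : dist (x : EuclideanSpace ℝ (Fin d)) x' ≤ t :=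
    (dist_triangle_right _ _ z).trans (by linarith)
  exact h.adj_of_dist_lt hne hxu hx'v (by linarith) (by linarith)

end IsStableMultiMatchingEuc

theorem few_long_edge_points_general
    (d : ℕ)
    (P : Set (EuclideanSpace ℝ (Fin d)))
    (G : SimpleGraph P)
    (k : ℕ)
    (hfin : ∀ x : P, {y : P | G.Adj x y}.Finite)
    (hdeg : ∀ x : P, {y : P | G.Adj x y}.ncard ≤ k)
    (hstable : IsStableMultiMatchingEuc d P G)
    (z : EuclideanSpace ℝ (Fin d)) (t : ℝ) :
    {x : P | dist (x : EuclideanSpace ℝ (Fin d)) z ≤ t / 2 ∧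
        ∃ y : P, G.Adj x y ∧ t < dist (x : EuclideanSpace ℝ (Fin d)) y}.Finite ∧
    {x : P | dist (x : EuclideanSpace ℝ (Fin d)) z ≤ t / 2 ∧
        ∃ y : P, G.Adj x y ∧ t < dist (x : EuclideanSpace ℝ (Fin d)) y}.ncard ≤ k + 1 :=
  (hstable.isClique_long_edge_points_near z t).finite_and_ncard_le_succ hfin hdeg

/-- In a stable multi-matching on a locally finite `P ⊆ ℝ^d` with all degrees at most `k`,
for any site `z` and any `t > 0` there are at most `k + 1` points within distance `t/2` of `z`
having an incident edge longer than `t`. -/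
theorem few_long_edge_points
    (d : ℕ) (hd : 1 ≤ d)
    (P : Set (EuclideanSpace ℝ (Fin d)))
    (hloc : ∀ K : Set (EuclideanSpace ℝ (Fin d)), IsCompact K → (P ∩ K).Finite)
    (G : SimpleGraph P)
    (k : ℕ)
    (hfin : ∀ x : P, {y : P | G.Adj x y}.Finite)
    (hdeg : ∀ x : P, {y : P | G.Adj x y}.ncard ≤ k)
    (hstable : IsStableMultiMatchingEuc d P G)
    (z : EuclideanSpace ℝ (Fin d)) (t : ℝ) (ht : 0 < t) :
    {x : P | dist (x : EuclideanSpace ℝ (Fin d)) z ≤ t / 2 ∧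
        ∃ y : P, G.Adj x y ∧ t < dist (x : EuclideanSpace ℝ (Fin d)) y}.Finite ∧
    {x : P | dist (x : EuclideanSpace ℝ (Fin d)) z ≤ t / 2 ∧
        ∃ y : P, G.Adj x y ∧ t < dist (x : EuclideanSpace ℝ (Fin d)) y}.ncard ≤ k + 1 :=
  few_long_edge_points_general d P G k hfin hdeg hstable z t
end

section
/- Let $P$ be a locally finite subset of $\mathbb{R}$ and let $G$ be a simple graph with vertex set $P$ that is a stable multi-matching. If $a, b, c, d \in P$ with $a < c < b < d$, and $\{a,b\}$ and $\{c,d\}$ are edges of $G$, then $\{c,b\}$ is also an edge of $G$. -/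
/-- `G` is a stable multi-matching on `P ⊆ ℝ`: for any two distinct points, either they are
adjacent, or one of them has no incident edge longer than the distance between them. -/
def IsStableMultiMatching (P : Set ℝ) (G : SimpleGraph P) : Prop :=
  ∀ x y : P, x ≠ y →
    G.Adj x y ∨
    (∀ z : P, G.Adj x z → |(z : ℝ) - (x : ℝ)| ≤ |(y : ℝ) - (x : ℝ)|) ∨
    (∀ z : P, G.Adj y z → |(z : ℝ) - (y : ℝ)| ≤ |(y : ℝ) - (x : ℝ)|)

theorem IsStableMultiMatching.adj_of_lt_dist {P : Set ℝ} {G : SimpleGraph P}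
    (hG : IsStableMultiMatching P G) {x y z w : P} (hxy : x ≠ y)
    (hxz : G.Adj x z) (hyw : G.Adj y w)
    (hz : |(y : ℝ) - x| < |(z : ℝ) - x|) (hw : |(y : ℝ) - x| < |(w : ℝ) - y|) :
    G.Adj x y := by
  rcases hG x y hxy with hadj | hx | hy
  · exact hadj
  · exact absurd (hx z hxz) hz.not_ge
  · exact absurd (hy w hyw) hw.not_ge

theorem crossing_implies_edge_general
    (P : Set ℝ)
    (G : SimpleGraph P)
    (hstable : IsStableMultiMatching P G)
    (a b c d : P)
    (hac : (a : ℝ) < c) (hcb : (c : ℝ) < b) (hbd : (b : ℝ) < d)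
    (hab : G.Adj a b) (hcd : G.Adj c d) :
    G.Adj c b := by
  have hcb_ne : c ≠ b := fun h => hcb.ne (congrArg Subtype.val h)
  refine hstable.adj_of_lt_dist hcb_ne hcd hab.symm ?_ ?_
  · rw [abs_of_pos (sub_pos.2 hcb), abs_of_pos (by linarith)]
    linarith
  · rw [abs_of_pos (sub_pos.2 hcb), abs_of_neg (by linarith)]
    linarith

/-- In a stable multi-matching on a locally finite `P ⊆ ℝ`, if the edges `{a,b}` and `{c,d}`
cross (i.e. `a < c < b < d`), then `{c,b}` is also an edge. -/
theorem crossing_implies_edge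
    (P : Set ℝ) (hloc : ∀ K : Set ℝ, IsCompact K → (P ∩ K).Finite)
    (G : SimpleGraph P)
    (hfin : ∀ x : P, {y : P | G.Adj x y}.Finite)
    (hstable : IsStableMultiMatching P G)
    (a b c d : P)
    (hac : (a : ℝ) < c) (hcb : (c : ℝ) < b) (hbd : (b : ℝ) < d)
    (hab : G.Adj a b) (hcd : G.Adj c d) :
    G.Adj c b :=
  crossing_implies_edge_general P G hstable a b c d hac hcb hbd hab hcd
end

section
/- Let $P$ be a locally finite subset of $\mathbb{R}$ and let $G$ be a simple graph with vertex set $P$ that is a direction-stable matching. If $a, b, c, d \in P$ with $a < c < b < d$, and $\{a,b\}$ and $\{c,d\}$ are edges of $G$, then $\{c,b\}$ is also an edge of $G$. -/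
/-- `G` is a direction-stable matching on `P ⊆ ℝ`: for any two points `x < y`, either they are
adjacent, or `x` has no right-edge longer than `y - x`, or `y` has no left-edge longer
than `y - x`. -/
def IsDirectionStableMatching (P : Set ℝ) (G : SimpleGraph P) : Prop :=
  ∀ x y : P, (x : ℝ) < y →
    G.Adj x y ∨
    (∀ z : P, G.Adj x z → (x : ℝ) < z → (z : ℝ) - (x : ℝ) ≤ (y : ℝ) - (x : ℝ)) ∨
    (∀ z : P, G.Adj y z → (z : ℝ) < y → (y : ℝ) - (z : ℝ) ≤ (y : ℝ) - (x : ℝ))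

/-- A right-edge `{x, z}` of `x` is longer than `y - x` exactly when `y < z`, and a left-edge
`{w, y}` of `y` is longer than `y - x` exactly when `w < x`. -/
theorem IsDirectionStableMatching.adj_of_lt_of_adj_of_adj {P : Set ℝ} {G : SimpleGraph P}
    (hG : IsDirectionStableMatching P G) {x y z w : P} (hxy : (x : ℝ) < y)
    (hxz : G.Adj x z) (hyz : (y : ℝ) < z) (hyw : G.Adj y w) (hwx : (w : ℝ) < x) :
    G.Adj x y := by
  rcases hG x y hxy with hadj | hright | hleft
  · exact hadj
  · linarith [hright z hxz (hxy.trans hyz)]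
  · linarith [hleft w hyw (hwx.trans hxy)]

theorem crossing_implies_edge_direction_stable_general
    (P : Set ℝ)
    (G : SimpleGraph P)
    (hstable : IsDirectionStableMatching P G)
    (a b c d : P)
    (hac : (a : ℝ) < c) (hcb : (c : ℝ) < b) (hbd : (b : ℝ) < d)
    (hab : G.Adj a b) (hcd : G.Adj c d) :
    G.Adj c b :=
  hstable.adj_of_lt_of_adj_of_adj hcb hcd hbd hab.symm hac

/-- In a direction-stable matching on a locally finite `P ⊆ ℝ`, if the edges `{a,b}` and
`{c,d}` cross (i.e. `a < c < b < d`), then `{c,b}` is also an edge. -/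
theorem crossing_implies_edge_direction_stable
    (P : Set ℝ) (hloc : ∀ K : Set ℝ, IsCompact K → (P ∩ K).Finite)
    (G : SimpleGraph P)
    (hfin : ∀ x : P, {y : P | G.Adj x y}.Finite)
    (hstable : IsDirectionStableMatching P G)
    (a b c d : P)
    (hac : (a : ℝ) < c) (hcb : (c : ℝ) < b) (hbd : (b : ℝ) < d)
    (hab : G.Adj a b) (hcd : G.Adj c d) :
    G.Adj c b :=
  crossing_implies_edge_direction_stable_general P G hstable a b c d hac hcb hbd hab hcd
end

section
/- Let $P$ be a locally finite subset of $\mathbb{R}$ and let $G$ be a simple graph with vertex set $P$ that is a stable multi-matching in which every vertex has degree at most $2$. Then no two edges of $G$ cross: there do not exist $a, b, c, d \in P$ with $a < c < b < d$ such that $\{a,b\}$ and $\{c,d\}$ are both edges of $G$. -/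
/-!
Suppose `{a, b}` and `{c, d}` cross, `a < c < b < d`. The pair `(c, b)` is closer than both
edges, so stability makes `{c, b}` an edge; now `b` and `c` have degree two, so `{a, c}` and
`{b, d}` are not edges. Stability of these two pairs gives `d - c ≤ c - a` and `b - a ≤ d - b`,
whose sum says `b ≤ c`.
-/

theorem SimpleGraph.eq_or_eq_or_eq_of_ncard_neighborSet_le_two {V : Type*} (G : SimpleGraph V)
    {v x y z : V} (hfin : (G.neighborSet v).Finite) (hdeg : (G.neighborSet v).ncard ≤ 2)
    (hx : G.Adj v x) (hy : G.Adj v y) (hz : G.Adj v z) : x = y ∨ x = z ∨ y = z := by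
  by_contra! ⟨hxy, hxz, hyz⟩
  have hsub : ({x, y, z} : Set V) ⊆ G.neighborSet v := by
    rintro u (rfl | rfl | rfl) <;> assumption
  have hcard : ({x, y, z} : Set V).ncard = 3 :=
    Set.ncard_eq_three.2 ⟨x, y, z, hxy, hxz, hyz, rfl⟩
  have := Set.ncard_le_ncard hsub hfin
  omega

theorem IsStableMultiMatching.adj_of_dist_lt {P : Set ℝ} {G : SimpleGraph P}
    (hstable : IsStableMultiMatching P G) {x y z w : P} (hxy : (x : ℝ) ≠ y)
    (hxz : G.Adj x z) (hyw : G.Adj y w)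
    (hz : |(y : ℝ) - x| < |(z : ℝ) - x|) (hw : |(y : ℝ) - x| < |(w : ℝ) - y|) :
    G.Adj x y := by
  rcases hstable x y (Subtype.coe_ne_coe.mp hxy) with h | h | h
  · exact h
  · exact absurd (h z hxz) hz.not_ge
  · exact absurd (h w hyw) hw.not_ge

theorem no_crossing_edges_degree_two_general
    (P : Set ℝ)
    (G : SimpleGraph P)
    (hfin : ∀ x : P, {y : P | G.Adj x y}.Finite)
    (hdeg : ∀ x : P, {y : P | G.Adj x y}.ncard ≤ 2)
    (hstable : IsStableMultiMatching P G) :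
    ¬ ∃ a b c d : P, (a : ℝ) < c ∧ (c : ℝ) < b ∧ (b : ℝ) < d ∧ G.Adj a b ∧ G.Adj c d := by
  rintro ⟨a, b, c, d, hac, hcb, hbd, hab, hcd⟩
  have hcb_adj : G.Adj c b := hstable.adj_of_dist_lt hcb.ne hcd hab.symm (by grind) (by grind)
  have hnac : ¬ G.Adj a c := fun h => by
    rcases G.eq_or_eq_or_eq_of_ncard_neighborSet_le_two (hfin c) (hdeg c) h.symm hcb_adj hcd
      with rfl | rfl | rfl <;> linarith
  have hnbd : ¬ G.Adj b d := fun h => by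
    rcases G.eq_or_eq_or_eq_of_ncard_neighborSet_le_two (hfin b) (hdeg b) hab.symm hcb_adj.symm h
      with rfl | rfl | rfl <;> linarith
  have hdc : (d : ℝ) - c ≤ c - a := by
    by_contra! h
    exact hnac (hstable.adj_of_dist_lt hac.ne hab hcd (by grind) (by grind))
  have hba : (b : ℝ) - a ≤ d - b := by
    by_contra! h
    exact hnbd (hstable.adj_of_dist_lt hbd.ne hab.symm hcd.symm (by grind) (by grind))
  linarith

/-- In a stable multi-matching on a locally finite `P ⊆ ℝ` in which every vertex has degree
at most `2`, no two edges cross. -/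
theorem no_crossing_edges_degree_two
    (P : Set ℝ) (hloc : ∀ K : Set ℝ, IsCompact K → (P ∩ K).Finite)
    (G : SimpleGraph P)
    (hfin : ∀ x : P, {y : P | G.Adj x y}.Finite)
    (hdeg : ∀ x : P, {y : P | G.Adj x y}.ncard ≤ 2)
    (hstable : IsStableMultiMatching P G) :
    ¬ ∃ a b c d : P, (a : ℝ) < c ∧ (c : ℝ) < b ∧ (b : ℝ) < d ∧ G.Adj a b ∧ G.Adj c d :=
  no_crossing_edges_degree_two_general P G hfin hdeg hstable
end

section
/- Let $P$ be a locally finite subset of $\mathbb{R}$ and let $G$ be a simple graph with vertex set $P$ that is a stable multi-matching in which every vertex has degree exactly $2$. Let $a < b < c < d$ be points of $P$ with $b - a > c - b$ and $d - c > c - b$. If $G$ contains a monotone path from $a$ to $b$ and a monotone path from $c$ to $d$, then $G$ contains a monotone path from $a$ to $d$ whose vertex set contains the vertex sets of both given paths. -/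
/-- `l` is a monotone path in `G`: a sequence of vertices that is strictly increasing and whose
consecutive elements are adjacent in `G`. -/
def IsMonotonePath (P : Set ℝ) (G : SimpleGraph P) (l : List P) : Prop :=
  l ≠ [] ∧ l.Chain' (fun u v : P => ((u : ℝ) < (v : ℝ)) ∧ G.Adj u v)

/-!
Induct on the number of points strictly between `b` and `c`. If `b ~ c`, concatenate the two
paths. Otherwise stability says that all edges at `b`, or all edges at `c`, have length at most
`c - b`; by the reflection `x ↦ -x` it suffices to treat `b`. Then the predecessor `x` of `b` on
the first path and the other neighbour `w` of `b` both lie above `a`, and `w` cannot lie below `b`: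
* if `x < w < b`, stability keeps the neighbours of every point of `(x, b)` inside `(x, b]`, so
  `w`–`b` is the only edge leaving a finite set of degree-two vertices, against the handshake lemma;
* if `w < x`, then `w` lies under an edge `y`–`z` of the path with `z < b`, and stability of the
  pair `z, w` forces `z ~ w`, although the two neighbours of `z` are already on the path.
So `w ∈ (b, c]`, and appending `w` to the first path brings `b` closer to `c`.
-/

open Set

section

variable {V : Type*} {G : SimpleGraph V} {f : V → ℝ}

theorem SimpleGraph.exists_edge_leaving_ne {T : Set V} (hT : T.Finite)
    (heven : ∀ v ∈ T, Even {u | G.Adj v u}.ncard) {w m : V} (hw : w ∈ T) (hm : m ∉ T)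
    (hwm : G.Adj w m) : ∃ v ∈ T, ∃ u ∉ T, G.Adj v u ∧ (v ≠ w ∨ u ≠ m) := by
  classical
  by_contra! hexit
  have : Fintype T := hT.fintype
  have hdeg (v : T) : (G.induce T).degree v = ({u | G.Adj v u} ∩ T).ncard := by
    rw [← card_neighborSet_eq_degree, ← Nat.card_eq_fintype_card, Nat.card_coe_set_eq,
      ← ncard_image_of_injective _ Subtype.val_injective]
    congr 1
    ext u
    simp [and_comm]
  have hw_odd : Odd ((G.induce T).degree ⟨w, hw⟩) := by
    have hsplit : {u | G.Adj w u} = insert m ({u | G.Adj w u} ∩ T) := by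
      ext u
      by_cases hu : u ∈ T
      · simpa [hu] using fun h : u = m => absurd (h ▸ hu) hm
      · simpa [hu] using ⟨fun h => (hexit w hw u hu h).2, fun h => h ▸ hwm⟩
    have := heven w hw
    rw [hsplit, ncard_insert_of_notMem (fun h => hm h.2) (hT.subset inter_subset_right)] at this
    simpa [hdeg, Nat.even_add_one] using this
  obtain ⟨v, hvw, hv_odd⟩ := exists_ne_odd_degree_of_exists_odd_degree _ _ hw_odd
  have hclosed : {u | G.Adj v u} ∩ T = {u | G.Adj v u} :=
    inter_eq_left.mpr fun u hu => by_contra fun huT => hvw (Subtype.ext (hexit v v.2 u huT hu).1)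
  rw [hdeg, hclosed] at hv_odd
  exact Nat.not_even_iff_odd.mpr hv_odd (heven v v.2)

lemma eq_or_eq_of_ncard_eq_two {v p q u : V} (hv : {w | G.Adj v w}.ncard = 2)
    (hp : G.Adj v p) (hq : G.Adj v q) (hpq : p ≠ q) (hu : G.Adj v u) : u = p ∨ u = q := by
  have hpair : {p, q} = {w | G.Adj v w} :=
    eq_of_subset_of_ncard_le (insert_subset hp (singleton_subset_iff.mpr hq))
      (by rw [hv, ncard_pair hpq]) (finite_of_ncard_ne_zero (by omega))
  have hu' : u ∈ ({p, q} : Set V) := hpair ▸ hu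
  simpa using hu'

-- `IsStableMultiMatching P G` is `IsStableWrt (↑) G`; positions are a parameter so that every
-- argument also applies to the mirror image `-f`.
def IsStableWrt (f : V → ℝ) (G : SimpleGraph V) : Prop :=
  ∀ x y, x ≠ y → G.Adj x y ∨ (∀ z, G.Adj x z → |f z - f x| ≤ |f y - f x|) ∨
    ∀ z, G.Adj y z → |f z - f y| ≤ |f y - f x|

lemma IsStableWrt.neg (h : IsStableWrt f G) : IsStableWrt (-f) G := by
  intro x y hxy
  simpa only [Pi.neg_apply, neg_sub_neg, abs_sub_comm] using h x y hxy

lemma IsStableWrt.adj_or_forall_adj_le (h : IsStableWrt f G) {x y z : V} (hxy : x ≠ y)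
    (hxz : G.Adj x z) (hlt : |f y - f x| < |f z - f x|) :
    G.Adj x y ∨ ∀ v, G.Adj y v → |f v - f y| ≤ |f y - f x| :=
  (h x y hxy).imp_right fun h' => h'.resolve_left fun hx => (hlt.trans_le (hx z hxz)).false

lemma neg_preimage_Ioo_finite (hfin : ∀ s t, (f ⁻¹' Ioo s t).Finite) (s t : ℝ) :
    ((-f) ⁻¹' Ioo s t).Finite := by
  convert hfin (-t) (-s) using 1
  ext v
  simp [neg_lt, lt_neg, and_comm]

def IsMonotoneChain (f : V → ℝ) (G : SimpleGraph V) (l : List V) : Prop :=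
  l.IsChain fun u v => f u < f v ∧ G.Adj u v

lemma IsMonotoneChain.reverse {l : List V} (hl : IsMonotoneChain f G l) :
    IsMonotoneChain (-f) G l.reverse :=
  List.isChain_reverse.mpr (hl.imp fun _ _ h => ⟨neg_lt_neg h.1, h.2.symm⟩)

lemma IsMonotoneChain.append {l₁ l₂ : List V} {b c : V} (h₁ : IsMonotoneChain f G l₁)
    (h₂ : IsMonotoneChain f G l₂) (hb : l₁.getLast? = some b) (hc : l₂.head? = some c)
    (hbc : f b < f c) (hadj : G.Adj b c) : IsMonotoneChain f G (l₁ ++ l₂) :=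
  List.IsChain.append h₁ h₂ (by simp_all)

def IsMonotoneWalk (f : V → ℝ) (G : SimpleGraph V) (p : ℕ → V) (k : ℕ) : Prop :=
  ∀ i < k, f (p i) < f (p (i + 1)) ∧ G.Adj (p i) (p (i + 1))

lemma IsMonotoneChain.exists_isMonotoneWalk {l : List V} {a b : V} (hl : IsMonotoneChain f G l)
    (ha : l.head? = some a) (hb : l.getLast? = some b) :
    ∃ p k, IsMonotoneWalk f G p k ∧ p 0 = a ∧ p k = b := by
  rw [List.head?_eq_getElem?, List.getElem?_eq_some_iff] at ha
  rw [List.getLast?_eq_getElem?, List.getElem?_eq_some_iff] at hb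
  obtain ⟨h0, rfl⟩ := ha
  obtain ⟨hk, rfl⟩ := hb
  refine ⟨fun i => l.getD i l[0], l.length - 1, fun i hi => ?_, ?_, ?_⟩
  · dsimp only
    rw [List.getD_eq_getElem l l[0] (by omega : i < l.length),
      List.getD_eq_getElem l l[0] (by omega : i + 1 < l.length)]
    exact List.isChain_iff_getElem.mp hl i (by omega)
  · simp [h0]
  · simp [hk]

lemma IsMonotoneWalk.strictMonoOn {p : ℕ → V} {k : ℕ} (hp : IsMonotoneWalk f G p k) :
    StrictMonoOn (f ∘ p) (Iic k) :=
  strictMonoOn_Iic_of_lt_succ fun i hi => (hp i hi).1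

lemma IsMonotoneWalk.lt {p : ℕ → V} {k : ℕ} (hp : IsMonotoneWalk f G p k) {i j : ℕ} (hij : i < j)
    (hjk : j ≤ k) : f (p i) < f (p j) :=
  hp.strictMonoOn (mem_Iic.2 (by omega)) (mem_Iic.2 hjk) hij

lemma IsMonotoneWalk.eq_add_two_of_adj {p : ℕ → V} {k : ℕ} (hp : IsMonotoneWalk f G p k)
    (hdeg : ∀ v, {u | G.Adj v u}.ncard = 2) {i j : ℕ} (hij : i + 1 < j) (hjk : j ≤ k)
    (hadj : G.Adj (p (i + 1)) (p j)) : j = i + 2 := by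
  rcases eq_or_eq_of_ncard_eq_two (hdeg _) (hp i (by omega)).2.symm (hp (i + 1) (by omega)).2
    (fun h => (hp.lt (by omega : i < i + 2) (by omega)).ne (congrArg f h)) hadj with h | h
  · exact absurd (congrArg f h) (hp.lt (by omega : i < j) hjk).ne'
  · exact hp.strictMonoOn.injOn hjk (mem_Iic.2 (by omega)) (congrArg f h)

-- `w` lies under the edge `y`–`z` but has an edge reaching beyond `z`, so stability forces `z ~ w`.
lemma IsStableWrt.false_of_crossing (hst : IsStableWrt f G) {y z z' w m : V}
    (hz : {u | G.Adj z u}.ncard = 2) (hzy : G.Adj z y) (hzz' : G.Adj z z') (hwm : G.Adj w m)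
    (hyw : f y < f w) (hwz : f w < f z) (hzz'_lt : f z < f z') (hzm : f z < f m) : False := by
  have hadj : G.Adj z w := by
    refine (hst.adj_or_forall_adj_le (fun h => hwz.ne (congrArg f h).symm) hzy ?_).resolve_right
      fun hw => ?_
    · rw [abs_of_neg (by linarith), abs_of_neg (by linarith)]; linarith
    · have := hw m hwm
      rw [abs_of_pos (by linarith), abs_of_neg (by linarith)] at this
      linarith
  rcases eq_or_eq_of_ncard_eq_two hz hzy hzz' (fun h => by subst h; linarith) hadj with rfl | rfl
  <;> linarith

lemma IsStableWrt.mem_Ioc_of_adj (hst : IsStableWrt f G) (hinj : Function.Injective f)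
    {x m v u : V} (hxm : G.Adj x m) (hxv : f x < f v) (hvm : f v < f m) (hnadj : ¬ G.Adj x v)
    (hm : ∀ u, G.Adj m u → f u < f m) (hvu : G.Adj v u) : f u ∈ Ioc (f x) (f m) := by
  have hv_short := (hst.adj_or_forall_adj_le (fun h => hxv.ne (congrArg f h)) hxm
    (by rw [abs_of_pos (by linarith), abs_of_pos (by linarith)]; linarith)).resolve_left hnadj
  have hvu_short := abs_le.1 ((abs_of_pos (sub_pos.2 hxv)) ▸ hv_short u hvu)
  refine ⟨lt_of_le_of_ne (by linarith) fun h => hnadj (hinj h ▸ hvu.symm), not_lt.1 fun hmu => ?_⟩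
  rcases hst m u (fun h => hmu.ne (congrArg f h)) with h | h | h
  · exact (hm u h).not_gt hmu
  · have := h x hxm.symm
    rw [abs_of_neg (by linarith), abs_of_pos (by linarith)] at this
    linarith
  · have := h v hvu.symm
    rw [abs_of_neg (by linarith), abs_of_pos (by linarith)] at this
    linarith

-- Every neighbour of a point of `(x, m)` lies in `(x, m]`, so `w`–`m` would be the only edge
-- leaving a finite set of vertices of degree two.
lemma IsStableWrt.false_of_adj_mem_Ioo (hst : IsStableWrt f G) (hinj : Function.Injective f)
    (hfin : ∀ s t, (f ⁻¹' Ioo s t).Finite) (hdeg : ∀ v, {u | G.Adj v u}.ncard = 2)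
    {x' x m w : V} (hxx' : G.Adj x x') (hxm : G.Adj x m) (hmw : G.Adj m w)
    (hx'x : f x' < f x) (hxw : f x < f w) (hwm : f w < f m) : False := by
  have hx_adj : ∀ u, G.Adj x u → u = x' ∨ u = m :=
    fun u => eq_or_eq_of_ncard_eq_two (hdeg x) hxx' hxm (fun h => by subst h; linarith)
  have hm_adj : ∀ u, G.Adj m u → u = x ∨ u = w :=
    fun u => eq_or_eq_of_ncard_eq_two (hdeg m) hxm.symm hmw (fun h => by subst h; linarith)
  set T := f ⁻¹' Ioo (f x) (f m)
  have hexit : ∀ v ∈ T, ∀ u ∉ T, G.Adj v u → v = w ∧ u = m := by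
    rintro v ⟨hxv, hvm⟩ u hu hvu
    have hu' := hst.mem_Ioc_of_adj hinj hxm hxv hvm
      (fun h => by rcases hx_adj v h with rfl | rfl <;> linarith)
      (fun u h => by rcases hm_adj u h with rfl | rfl <;> linarith) hvu
    obtain rfl : u = m := hinj (le_antisymm hu'.2 (not_lt.1 fun h => hu ⟨hu'.1, h⟩))
    rcases hm_adj v hvu.symm with rfl | rfl
    · exact absurd hxv (lt_irrefl _)
    · exact ⟨rfl, rfl⟩
  obtain ⟨v, hv, u, hu, hvu, hne⟩ := SimpleGraph.exists_edge_leaving_ne (hfin _ _)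
    (fun v _ => by rw [hdeg v]; exact even_two) ⟨hxw, hwm⟩ (fun h => h.2.false) hmw.symm
  exact hne.elim (· (hexit v hv u hu hvu).1) (· (hexit v hv u hu hvu).2)

lemma IsMonotoneWalk.false_of_adj_last_of_lt {p : ℕ → V} {k : ℕ}
    (hp : IsMonotoneWalk f G p (k + 1)) (hst : IsStableWrt f G) (hinj : Function.Injective f)
    (hdeg : ∀ v, {u | G.Adj v u}.ncard = 2) {w : V} (hw : G.Adj w (p (k + 1)))
    (h0w : f (p 0) < f w) (hwk : f w < f (p k)) : False := by
  classical
  have hex : ∃ j, f w ≤ f (p j) := ⟨k, hwk.le⟩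
  obtain ⟨i, hi⟩ : ∃ i, Nat.find hex = i + 1 :=
    Nat.exists_eq_add_one.2 (Nat.pos_of_ne_zero fun h => (Nat.find_spec hex).not_gt (h ▸ h0w))
  have hik : i + 1 ≤ k := hi ▸ Nat.find_min' hex hwk.le
  have hyw : f (p i) < f w := not_le.1 (Nat.find_min hex (by omega))
  rcases (hi ▸ Nat.find_spec hex : f w ≤ f (p (i + 1))).lt_or_eq with hwz | hwz
  · exact hst.false_of_crossing (hdeg _) (hp i (by omega)).2.symm (hp (i + 1) (by omega)).2 hw
      hyw hwz (hp (i + 1) (by omega)).1 (hp.lt (by omega) le_rfl)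
  · obtain rfl := hinj hwz
    have := hp.eq_add_two_of_adj hdeg (by omega) le_rfl hw
    obtain rfl : i + 1 = k := by omega
    exact hwk.false

lemma IsMonotoneWalk.false_of_adj_last {p : ℕ → V} {k : ℕ} (hp : IsMonotoneWalk f G p (k + 2))
    (hst : IsStableWrt f G) (hinj : Function.Injective f) (hfin : ∀ s t, (f ⁻¹' Ioo s t).Finite)
    (hdeg : ∀ v, {u | G.Adj v u}.ncard = 2) {w : V} (hw : G.Adj (p (k + 2)) w)
    (hwx : w ≠ p (k + 1)) (h0w : f (p 0) < f w) (hwm : f w < f (p (k + 2))) : False := by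
  rcases lt_trichotomy (f w) (f (p (k + 1))) with h | h | h
  · exact hp.false_of_adj_last_of_lt hst hinj hdeg hw.symm h0w h
  · exact hwx (hinj h)
  · exact hst.false_of_adj_mem_Ioo hinj hfin hdeg (hp k (by omega)).2.symm
      (hp (k + 1) (by omega)).2 hw (hp k (by omega)).1 h hwm

lemma IsMonotoneChain.exists_adj_gt_of_forall_adj_le {l : List V} {a b : V}
    (hl : IsMonotoneChain f G l) (ha : l.head? = some a) (hb : l.getLast? = some b)
    (hst : IsStableWrt f G) (hinj : Function.Injective f) (hfin : ∀ s t, (f ⁻¹' Ioo s t).Finite)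
    (hdeg : ∀ v, {u | G.Adj v u}.ncard = 2) {r : ℝ} (hr : r < f b - f a)
    (hshort : ∀ v, G.Adj b v → |f v - f b| ≤ r) : ∃ w, G.Adj b w ∧ f b < f w ∧ f w ≤ f b + r := by
  obtain ⟨p, k, hp, rfl, rfl⟩ := hl.exists_isMonotoneWalk ha hb
  have hnear : ∀ v, G.Adj (p k) v → f (p 0) < f v ∧ f v ≤ f (p k) + r := fun v hv => by
    have := abs_le.1 (hshort v hv)
    constructor <;> linarith
  obtain ⟨x, hx⟩ := nonempty_of_ncard_ne_zero (s := {u | G.Adj (p k) u}) (by rw [hdeg]; norm_num)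
  obtain ⟨k, rfl⟩ : ∃ n, k = n + 2 := by
    rcases k with _ | _ | k
    · linarith [(abs_nonneg _).trans (hshort x hx)]
    · exact (hnear _ (hp 0 one_pos).2.symm).1.false.elim
    · exact ⟨k, rfl⟩
  obtain ⟨w, hw, hwx⟩ := exists_ne_of_one_lt_ncard (s := {u | G.Adj (p (k + 2)) u})
    (by rw [hdeg]; norm_num) (p (k + 1))
  rcases lt_trichotomy (f w) (f (p (k + 2))) with h | h | h
  · exact (hp.false_of_adj_last hst hinj hfin hdeg hw hwx (hnear w hw).1 h).elim
  · exact (G.ne_of_adj hw (hinj h).symm).elim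
  · exact ⟨w, hw, h, (hnear w hw).2⟩

lemma exists_adj_mem_Ioo (hst : IsStableWrt f G) (hinj : Function.Injective f)
    (hfin : ∀ s t, (f ⁻¹' Ioo s t).Finite) (hdeg : ∀ v, {u | G.Adj v u}.ncard = 2)
    {a b c d : V} {α δ : List V}
    (hα : IsMonotoneChain f G α) (hαa : α.head? = some a) (hαb : α.getLast? = some b)
    (hδ : IsMonotoneChain f G δ) (hδc : δ.head? = some c) (hδd : δ.getLast? = some d)
    (hbc : f b < f c) (h1 : f c - f b < f b - f a) (h2 : f c - f b < f d - f c)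
    (hnadj : ¬ G.Adj b c) :
    (∃ w, G.Adj b w ∧ f w ∈ Ioo (f b) (f c)) ∨ ∃ u, G.Adj u c ∧ f u ∈ Ioo (f b) (f c) := by
  have hbc_abs : |f c - f b| = f c - f b := abs_of_pos (sub_pos.2 hbc)
  rcases hst b c (fun h => hbc.ne (congrArg f h)) with h | hb | hc
  · exact absurd h hnadj
  · obtain ⟨w, hbw, hbw', hwc⟩ := hα.exists_adj_gt_of_forall_adj_le hαa hαb hst hinj hfin hdeg h1
      (by simpa only [hbc_abs] using hb)
    exact Or.inl ⟨w, hbw, hbw', (by linarith : f w ≤ f c).lt_of_ne fun h => hnadj (hinj h ▸ hbw)⟩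
  · obtain ⟨u, hcu, hcu', hub⟩ := hδ.reverse.exists_adj_gt_of_forall_adj_le (by simpa)
      (by simpa) hst.neg (neg_injective.comp hinj) (neg_preimage_Ioo_finite hfin) hdeg
      (r := f c - f b) (by simp only [Pi.neg_apply]; linarith)
      (by simpa only [Pi.neg_apply, neg_sub_neg, abs_sub_comm, hbc_abs] using hc)
    simp only [Pi.neg_apply] at hcu' hub
    exact Or.inr ⟨u, hcu.symm,
      (by linarith : f b ≤ f u).lt_of_ne fun h => hnadj (hinj h ▸ hcu.symm), by linarith⟩

theorem exists_monotoneChain_join (hst : IsStableWrt f G) (hinj : Function.Injective f)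
    (hfin : ∀ s t, (f ⁻¹' Ioo s t).Finite) (hdeg : ∀ v, {u | G.Adj v u}.ncard = 2)
    {a b c d : V} {α δ : List V}
    (hα : IsMonotoneChain f G α) (hαa : α.head? = some a) (hαb : α.getLast? = some b)
    (hδ : IsMonotoneChain f G δ) (hδc : δ.head? = some c) (hδd : δ.getLast? = some d)
    (hbc : f b < f c) (h1 : f c - f b < f b - f a) (h2 : f c - f b < f d - f c) :
    ∃ L, IsMonotoneChain f G L ∧ L.head? = some a ∧ L.getLast? = some d ∧ α ⊆ L ∧ δ ⊆ L := by
  induction hn : (f ⁻¹' Ioo (f b) (f c)).ncard using Nat.strong_induction_on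
    generalizing b c α δ with
  | _ n ih =>
  by_cases hadj : G.Adj b c
  · exact ⟨α ++ δ, hα.append hδ hαb hδc hbc hadj, by simp [hαa], by simp [hδd],
      List.subset_append_left _ _, List.subset_append_right _ _⟩
  have hshrink {s t : ℝ} (hsub : Ioo s t ⊆ Ioo (f b) (f c)) {v : V}
      (hv : f v ∈ Ioo (f b) (f c)) (hv' : f v ∉ Ioo s t) : (f ⁻¹' Ioo s t).ncard < n :=
    hn ▸ ncard_lt_ncard ((ssubset_iff_of_subset (preimage_mono hsub)).2 ⟨v, hv, hv'⟩) (hfin _ _)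
  rcases exists_adj_mem_Ioo hst hinj hfin hdeg hα hαa hαb hδ hδc hδd hbc h1 h2 hadj with
    ⟨w, hbw, hw⟩ | ⟨u, huc, hu⟩
  · obtain ⟨L, hL, hLa, hLd, hαL, hδL⟩ :=
      ih _ (hshrink (Ioo_subset_Ioo_left hw.1.le) hw (fun h => h.1.false))
        (hα.append (List.isChain_singleton w) hαb rfl hw.1 hbw) (by simp [hαa]) (by simp)
        hδ hδc hδd hw.2 (by linarith [hw.1]) (by linarith [hw.1]) rfl
    exact ⟨L, hL, hLa, hLd, List.Subset.trans (List.subset_append_left _ _) hαL, hδL⟩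
  · obtain ⟨L, hL, hLa, hLd, hαL, hδL⟩ :=
      ih _ (hshrink (Ioo_subset_Ioo_right hu.2.le) hu (fun h => h.2.false))
        hα hαa hαb (IsMonotoneChain.append (List.isChain_singleton u) hδ rfl hδc hu.2 huc) rfl
        (by simp [List.getLast?_cons, hδd]) hu.1 (by linarith [hu.2]) (by linarith [hu.2]) rfl
    exact ⟨L, hL, hLa, hLd, hαL, List.Subset.trans (List.subset_append_right _ _) hδL⟩

end

theorem combine_monotone_paths_general
    (P : Set ℝ) (hloc : ∀ K : Set ℝ, IsCompact K → (P ∩ K).Finite)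
    (G : SimpleGraph P)
    (hdeg : ∀ x : P, {y : P | G.Adj x y}.ncard = 2)
    (hstable : IsStableMultiMatching P G)
    (a b c d : P)
    (hbc : (b : ℝ) < c)
    (h1 : (c : ℝ) - b < (b : ℝ) - a) (h2 : (c : ℝ) - b < (d : ℝ) - c)
    (α : List P) (hα : IsMonotonePath P G α)
    (hαa : α.head? = some a) (hαb : α.getLast? = some b)
    (δ : List P) (hδ : IsMonotonePath P G δ)
    (hδc : δ.head? = some c) (hδd : δ.getLast? = some d) :
    ∃ L : List P, IsMonotonePath P G L ∧ L.head? = some a ∧ L.getLast? = some d ∧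
      (∀ v ∈ α, v ∈ L) ∧ (∀ v ∈ δ, v ∈ L) := by
  have hfin (s t : ℝ) : ((↑) ⁻¹' Ioo s t : Set P).Finite :=
    ((hloc _ isCompact_Icc).preimage Subtype.val_injective.injOn).subset
      fun v hv => ⟨v.2, Ioo_subset_Icc_self hv⟩
  obtain ⟨L, hL, hLa, hLd, hαL, hδL⟩ := exists_monotoneChain_join hstable Subtype.val_injective
    hfin hdeg hα.2 hαa hαb hδ.2 hδc hδd hbc h1 h2
  exact ⟨L, ⟨fun h => by simp [h] at hLa, hL⟩, hLa, hLd, hαL, hδL⟩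

/-- Combining monotone paths: if `a < b < c < d`, the intervals `[a,b]` and `[c,d]` are both
longer than `[b,c]`, and a 2-regular stable multi-matching has a monotone path from `a` to `b`
and one from `c` to `d`, then it has a monotone path from `a` to `d` containing both. -/
theorem combine_monotone_paths
    (P : Set ℝ) (hloc : ∀ K : Set ℝ, IsCompact K → (P ∩ K).Finite)
    (G : SimpleGraph P)
    (hdeg : ∀ x : P, {y : P | G.Adj x y}.ncard = 2)
    (hstable : IsStableMultiMatching P G)
    (a b c d : P)
    (hab : (a : ℝ) < b) (hbc : (b : ℝ) < c) (hcd : (c : ℝ) < d)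
    (h1 : (c : ℝ) - b < (b : ℝ) - a) (h2 : (c : ℝ) - b < (d : ℝ) - c)
    (α : List P) (hα : IsMonotonePath P G α)
    (hαa : α.head? = some a) (hαb : α.getLast? = some b)
    (δ : List P) (hδ : IsMonotonePath P G δ)
    (hδc : δ.head? = some c) (hδd : δ.getLast? = some d) :
    ∃ L : List P, IsMonotonePath P G L ∧ L.head? = some a ∧ L.getLast? = some d ∧
      (∀ v ∈ α, v ∈ L) ∧ (∀ v ∈ δ, v ∈ L) :=
  combine_monotone_paths_general P hloc G hdeg hstable a b c d hbc h1 h2 α hα hαa hαb δ hδ hδc hδd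
end

section
/- Let $P$ be a locally finite subset of $\mathbb{R}$ and let $G$ be a simple graph with vertex set $P$ that is a direction-stable matching in which every vertex has degree exactly $2$. Suppose $x \in P$ is a right-beak with edges $\{x,y\}$ and $\{x,z\}$ where $x < y < z$, and suppose the connected component of $x$ in $G$ contains some vertex $w < x$. Then the neighbour of $y$ other than $x$ lies strictly to the left of $x$ (in particular $y$ is a left-beak), and no vertex of the connected component of $x$ lies strictly between $x$ and $y$. -/
namespace SimpleGraph

variable {V : Type*} {G : SimpleGraph V}

lemma Reachable.mem_of_neighborSet_subset {A : Set V} (hA : ∀ a ∈ A, G.neighborSet a ⊆ A)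
    {v w : V} (h : G.Reachable v w) (hv : v ∈ A) : w ∈ A := by
  obtain ⟨p⟩ := h
  induction p with
  | nil => exact hv
  | cons hadj _ ih => exact ih (hA _ hv hadj)

lemma neighborSet_eq_pair {v a b : V} (h : (G.neighborSet v).ncard = 2) (ha : G.Adj v a)
    (hb : G.Adj v b) (hab : a ≠ b) : G.neighborSet v = {a, b} :=
  (Set.eq_of_subset_of_ncard_le (t := G.neighborSet v) (Set.pair_subset ha hb)
    (by rw [h, Set.ncard_pair hab]) (Set.finite_of_ncard_pos (by rw [h]; omega))).symm

lemma exists_neighborSet_eq_pair {v a : V} (h : (G.neighborSet v).ncard = 2) (ha : G.Adj v a) :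
    ∃ b, G.neighborSet v = {a, b} := by
  obtain ⟨b, hb, hba⟩ := Set.exists_ne_of_one_lt_ncard (by rw [h]; omega) a
  exact ⟨b, neighborSet_eq_pair h ha hb hba.symm⟩

lemma degree_induce {A : Set V} [Fintype A] [DecidableRel (G.induce A).Adj] (v : A) :
    (G.induce A).degree v = (G.neighborSet v ∩ A).ncard := by
  rw [← card_neighborSet_eq_degree, ← Nat.card_eq_fintype_card, Nat.card_coe_set_eq,
    ← Set.ncard_image_of_injective _ Subtype.val_injective]
  congr 1
  ext t
  simp

lemma exists_ne_not_neighborSet_subset (heven : ∀ v, Even (G.neighborSet v).ncard)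
    {A : Set V} (hA : A.Finite) {s : V} (hs : s ∈ A) (hodd : Odd (G.neighborSet s ∩ A).ncard) :
    ∃ s' ∈ A, s' ≠ s ∧ ¬ G.neighborSet s' ⊆ A := by
  classical
  have := hA.fintype
  obtain ⟨⟨s', hs'⟩, hne, hodd'⟩ :=
    (G.induce A).exists_ne_odd_degree_of_exists_odd_degree ⟨s, hs⟩ (by rwa [degree_induce])
  refine ⟨s', hs', fun h => hne (Subtype.ext h), fun hsub => ?_⟩
  rw [degree_induce, Set.inter_eq_left.mpr hsub] at hodd'
  exact Nat.not_even_iff_odd.mpr hodd' (heven s')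

lemma neighborSet_subset_of_boundary_subset (hdeg : ∀ v, (G.neighborSet v).ncard = 2)
    {A : Set V} (hA : A.Finite) {x z : V} (hxA : x ∈ A) (hzx : G.Adj z x)
    (hx : G.neighborSet x ⊆ A) (hbd : ∀ s ∈ A, ¬ G.neighborSet s ⊆ A → s = z ∨ G.Adj z s) :
    ∀ s ∈ A, G.neighborSet s ⊆ A := by
  have heven : ∀ v, Even (G.neighborSet v).ncard := fun v => by rw [hdeg v]; exact even_two
  have hodd : ∀ {a b : V}, a ∈ A → b ∉ A → Odd (({a, b} : Set V) ∩ A).ncard := by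
    intro a b ha hb
    simp [Set.insert_inter_of_mem ha, Set.singleton_inter_eq_empty.mpr hb]
  have hzA : z ∈ A := hx hzx.symm
  obtain ⟨c, hNz⟩ := exists_neighborSet_eq_pair (hdeg z) hzx
  have hbd' : ∀ s ∈ A, ¬ G.neighborSet s ⊆ A → s = z ∨ s = c := by
    intro s hs hsA
    rcases hbd s hs hsA with rfl | hzs
    · exact Or.inl rfl
    · rw [← mem_neighborSet, hNz] at hzs
      rcases hzs with rfl | rfl
      exacts [absurd hx hsA, Or.inr rfl]
  -- An edge leaving `A` is `zc` (if `c ∉ A`) or the other edge at `c` (if `c ∈ A`); its end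
  -- in `A` would be the only vertex of odd degree in the subgraph induced on `A`.
  by_cases hcA : c ∈ A
  · have hz : G.neighborSet z ⊆ A := hNz ▸ Set.pair_subset hxA hcA
    have hcz : G.Adj c z := (show c ∈ G.neighborSet z by simp [hNz]).symm
    obtain ⟨c', hNc⟩ := exists_neighborSet_eq_pair (hdeg c) hcz
    by_cases hc'A : c' ∈ A
    · intro s hs
      by_contra hsA
      rcases hbd' s hs hsA with rfl | rfl
      · exact hsA hz
      · exact hsA (hNc ▸ Set.pair_subset hzA hc'A)
    · obtain ⟨s, hs, hsc, hsA⟩ :=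
        exists_ne_not_neighborSet_subset heven hA hcA (hNc ▸ hodd hzA hc'A)
      rcases hbd' s hs hsA with rfl | rfl
      · exact absurd hz hsA
      · exact absurd rfl hsc
  · obtain ⟨s, hs, hsz, hsA⟩ :=
      exists_ne_not_neighborSet_subset heven hA hzA (hNz ▸ hodd hxA hcA)
    rcases hbd' s hs hsA with rfl | rfl
    · exact absurd rfl hsz
    · exact absurd hs hcA

end SimpleGraph

namespace IsDirectionStableMatching

variable {P : Set ℝ} {G : SimpleGraph P}

lemma lt_of_not_adj_left (hG : IsDirectionStableMatching P G) {a b s t : P} (hab : G.Adj a b)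
    (has : (a : ℝ) < s) (hsb : (s : ℝ) < b) (has' : ¬ G.Adj a s) (hst : G.Adj s t) :
    (a : ℝ) < t := by
  by_contra! hta
  rcases hta.lt_or_eq with hta | hta
  · rcases hG a s has with h | h | h
    · exact has' h
    · linarith [h b hab (has.trans hsb)]
    · linarith [h t hst (hta.trans has)]
  · obtain rfl : t = a := Subtype.ext hta
    exact has' hst.symm

lemma lt_of_not_adj_right (hG : IsDirectionStableMatching P G) {a b s t : P} (hab : G.Adj a b)
    (has : (a : ℝ) < s) (hsb : (s : ℝ) < b) (hsb' : ¬ G.Adj s b) (hst : G.Adj s t) :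
    (t : ℝ) < b := by
  by_contra! hbt
  rcases hbt.lt_or_eq with hbt | hbt
  · rcases hG s b hsb with h | h | h
    · exact hsb' h
    · linarith [h t hst (hsb.trans hbt)]
    · linarith [h a hab.symm (has.trans hsb)]
  · obtain rfl : t = b := Subtype.ext hbt.symm
    exact hsb' hst

lemma mem_Icc_of_reachable (hG : IsDirectionStableMatching P G)
    (hdeg : ∀ v, (G.neighborSet v).ncard = 2)
    (hloc : ∀ K : Set ℝ, IsCompact K → (P ∩ K).Finite)
    {x y z : P} (hxy : (x : ℝ) < y) (hyz : (y : ℝ) < z) (haxy : G.Adj x y) (haxz : G.Adj x z)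
    (hy : G.neighborSet y ⊆ Subtype.val ⁻¹' Set.Icc (x : ℝ) z) {w : P} (hw : G.Reachable x w) :
    (w : ℝ) ∈ Set.Icc (x : ℝ) z := by
  set A : Set P := Subtype.val ⁻¹' Set.Icc (x : ℝ) z
  have hAfin : A.Finite :=
    ((hloc _ isCompact_Icc).preimage Subtype.val_injective.injOn).subset fun s hs => ⟨s.2, hs⟩
  have hNx : G.neighborSet x = {y, z} :=
    SimpleGraph.neighborSet_eq_pair (hdeg x) haxy haxz fun h => hyz.ne (congrArg _ h)
  have hxA : x ∈ A := ⟨le_rfl, (hxy.trans hyz).le⟩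
  have hx : G.neighborSet x ⊆ A :=
    hNx ▸ Set.pair_subset ⟨hxy.le, hyz.le⟩ ⟨(hxy.trans hyz).le, le_rfl⟩
  have hbd : ∀ s ∈ A, ¬ G.neighborSet s ⊆ A → s = z ∨ G.Adj z s := by
    rintro s ⟨hxs, hsz⟩ hsA
    rcases hsz.eq_or_lt with hsz | hsz
    · exact Or.inl (Subtype.ext hsz)
    have hxs : (x : ℝ) < s := hxs.lt_of_ne fun h => hsA (Subtype.ext h ▸ hx)
    have hnxs : ¬ G.Adj x s := by
      rw [← SimpleGraph.mem_neighborSet, hNx]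
      rintro (rfl | rfl)
      exacts [hsA hy, hsz.ne rfl]
    obtain ⟨t, hst, htA⟩ := Set.not_subset.mp hsA
    by_contra! hzs
    exact htA ⟨(hG.lt_of_not_adj_left haxz hxs hsz hnxs hst).le,
      (hG.lt_of_not_adj_right haxz hxs hsz (fun h => hzs.2 h.symm) hst).le⟩
  exact hw.mem_of_neighborSet_subset
    (SimpleGraph.neighborSet_subset_of_boundary_subset hdeg hAfin hxA haxz.symm hx hbd) hxA

lemma notMem_Ioo_of_reachable (hG : IsDirectionStableMatching P G)
    (hdeg : ∀ v, (G.neighborSet v).ncard = 2)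
    {x y z : P} (hyz : (y : ℝ) < z) (haxy : G.Adj x y) (haxz : G.Adj x z)
    (hy : ∀ u, G.Adj y u → u ≠ x → (u : ℝ) < x) {v : P} (hv : G.Reachable x v) :
    (v : ℝ) ∉ Set.Ioo (x : ℝ) y := by
  set B : Set P := Subtype.val ⁻¹' Set.Ioo (x : ℝ) y
  have hNx : G.neighborSet x = {y, z} :=
    SimpleGraph.neighborSet_eq_pair (hdeg x) haxy haxz fun h => hyz.ne (congrArg _ h)
  have hB : ∀ s ∈ B, G.neighborSet s ⊆ B := by
    rintro s ⟨hxs, hsy⟩ t hst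
    have hnxs : ¬ G.Adj x s := by
      rw [← SimpleGraph.mem_neighborSet, hNx]
      rintro (rfl | rfl)
      exacts [hsy.false, (hsy.trans hyz).false]
    have hnsy : ¬ G.Adj s y := fun h =>
      (hy s h.symm fun e => hxs.ne (congrArg _ e.symm)).not_gt hxs
    exact ⟨hG.lt_of_not_adj_left haxz hxs (hsy.trans hyz) hnxs hst,
      hG.lt_of_not_adj_right haxy hxs hsy hnsy hst⟩
  exact fun hvB => (hv.symm.mem_of_neighborSet_subset hB hvB).1.false

end IsDirectionStableMatching

/-- In a 2-regular direction-stable matching on a locally finite `P ⊆ ℝ`, if `x` is a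
right-beak with edges to `y` and `z` (where `x < y < z`), and the component of `x` contains a
vertex to the left of `x`, then the other neighbour of `y` lies strictly to the left of `x`
(so `y` is a left-beak), and no vertex of the component of `x` lies strictly between `x`
and `y`. -/
theorem right_beak_followed_by_left_beak
    (P : Set ℝ) (hloc : ∀ K : Set ℝ, IsCompact K → (P ∩ K).Finite)
    (G : SimpleGraph P)
    (hdeg : ∀ v : P, {u : P | G.Adj v u}.ncard = 2)
    (hstable : IsDirectionStableMatching P G)
    (x y z : P)
    (hxy : (x : ℝ) < y) (hyz : (y : ℝ) < z)
    (haxy : G.Adj x y) (haxz : G.Adj x z)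
    (w : P) (hw : G.Reachable x w) (hwx : (w : ℝ) < x) :
    (∀ u : P, G.Adj y u → u ≠ x → (u : ℝ) < x) ∧
    (∀ v : P, G.Reachable x v → ¬ ((x : ℝ) < v ∧ (v : ℝ) < y)) := by
  have hleft : ∀ u : P, G.Adj y u → u ≠ x → (u : ℝ) < x := by
    intro u hyu hux
    by_contra! hxu
    have hNy : G.neighborSet y = {x, u} :=
      SimpleGraph.neighborSet_eq_pair (hdeg y) haxy.symm hyu hux.symm
    have huz : (u : ℝ) ≤ z := by
      by_cases hyz' : G.Adj y z
      · rw [← SimpleGraph.mem_neighborSet, hNy] at hyz'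
        rcases hyz' with rfl | rfl
        exacts [absurd (hxy.trans hyz) (lt_irrefl _), le_rfl]
      · exact (hstable.lt_of_not_adj_right haxz hxy hyz hyz' hyu).le
    have hy : G.neighborSet y ⊆ Subtype.val ⁻¹' Set.Icc (x : ℝ) z :=
      hNy ▸ Set.pair_subset ⟨le_rfl, (hxy.trans hyz).le⟩ ⟨hxu, huz⟩
    exact hwx.not_ge (hstable.mem_Icc_of_reachable hdeg hloc hxy hyz haxy haxz hy hw).1
  exact ⟨hleft, fun v hv => hstable.notMem_Ioo_of_reachable hdeg hyz haxy haxz hleft hv⟩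
end

section
/- Let $(p_{i,j})_{i \in \mathbb{Z}, j \in \{1,2,3\}}$ be real numbers with $p_{i,j} \in [i, i + 1/3]$ for all $i, j$, and with $p_{i,1}, p_{i,2}, p_{i,3}$ pairwise distinct for each $i$. Let $P = \{p_{i,j} : i \in \mathbb{Z}, j \in \{1,2,3\}\}$, and let $G$ be the simple graph on $P$ whose edges are exactly the pairs $\{p_{i,j}, p_{i,j'}\}$ with $j \neq j'$ (i.e. each triple $\{p_{i,1}, p_{i,2}, p_{i,3}\}$ forms a triangle). Then $G$ is a stable multi-matching in which every vertex has degree exactly $2$, and every connected component of $G$ has exactly $3$ vertices. -/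
/-!
Since every point lies within `1/3` of its integer part, `G` is exactly the graph joining distinct
points with the same integer part. Edges therefore have length at most `1/3`, while points with
different integer parts are at distance at least `2/3`, which gives stability; the neighbours and
the component of a point are its own triple minus itself, resp. its own triple.
-/

def SimpleGraph.IsKernelGraph {V α : Type*} (G : SimpleGraph V) (f : V → α) : Prop :=
  ∀ u v, G.Adj u v ↔ u ≠ v ∧ f u = f v

namespace SimpleGraph.IsKernelGraph

variable {V α : Type*} {G : SimpleGraph V} {f : V → α}

theorem reachable_iff (hG : G.IsKernelGraph f) {u v : V} : G.Reachable u v ↔ f u = f v := by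
  refine ⟨fun h => ?_, fun h => ?_⟩
  · rw [reachable_iff_reflTransGen] at h
    induction h with
    | refl => rfl
    | tail _ hadj ih => exact ih.trans ((hG _ _).mp hadj).2
  · by_cases huv : u = v
    · exact huv ▸ Reachable.refl u
    · exact ((hG u v).mpr ⟨huv, h⟩).reachable

theorem setOf_adj_eq (hG : G.IsKernelGraph f) (u : V) :
    {v | G.Adj u v} = {v | f v = f u} \ {u} := by
  ext v
  simp only [hG u v, Set.mem_sdiff, Set.mem_ofPred_eq, Set.mem_singleton_iff]
  exact ⟨fun ⟨huv, h⟩ => ⟨h.symm, Ne.symm huv⟩, fun ⟨h, hvu⟩ => ⟨Ne.symm hvu, h.symm⟩⟩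

end SimpleGraph.IsKernelGraph

theorem isStableMultiMatching_of_isKernelGraph_floor {P : Set ℝ} {G : SimpleGraph P}
    (hG : G.IsKernelGraph fun x => ⌊(x : ℝ)⌋) (hfract : ∀ x ∈ P, Int.fract x ≤ 1 / 2) :
    IsStableMultiMatching P G := by
  intro x y hxy
  by_cases hxy_floor : ⌊(x : ℝ)⌋ = ⌊(y : ℝ)⌋
  · exact Or.inl ((hG x y).mpr ⟨hxy, hxy_floor⟩)
  refine Or.inr (Or.inl fun z hz => ?_)
  have hxz_floor : ⌊(x : ℝ)⌋ = ⌊(z : ℝ)⌋ := ((hG x z).mp hz).2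
  have hx_fract := hfract x x.2
  have hz_fract := hfract z z.2
  have hy_fract := hfract y y.2
  rw [Int.fract] at hx_fract hz_fract hy_fract
  rw [← hxz_floor] at hz_fract
  have hz_floor : (⌊(x : ℝ)⌋ : ℝ) ≤ z := hxz_floor ▸ Int.floor_le (z : ℝ)
  have hxz : |(z : ℝ) - x| ≤ 1 / 2 := by
    rw [abs_sub_le_iff]
    constructor <;> linarith [Int.floor_le (x : ℝ)]
  have hxy_far : 1 / 2 ≤ |(y : ℝ) - x| := by
    rcases lt_or_gt_of_ne hxy_floor with hlt | hlt
    · have : (⌊(x : ℝ)⌋ : ℝ) + 1 ≤ ⌊(y : ℝ)⌋ := by exact_mod_cast hlt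
      linarith [le_abs_self ((y : ℝ) - x), Int.floor_le (y : ℝ)]
    · have : (⌊(y : ℝ)⌋ : ℝ) + 1 ≤ ⌊(x : ℝ)⌋ := by exact_mod_cast hlt
      linarith [neg_abs_le ((y : ℝ) - x), Int.floor_le (x : ℝ)]
  exact hxz.trans hxy_far

section Blocks

variable {ι : Type*} {p : ℤ → ι → ℝ} (hfloor : ∀ i j, ⌊p i j⌋ = i) (hinj : ∀ i, (p i).Injective)
  {P : Set ℝ} (hP : P = {x : ℝ | ∃ i j, x = p i j})
include hfloor hinj hP

theorem isKernelGraph_floor_of_adj_iff {G : SimpleGraph P}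
    (hG : ∀ u v : P, G.Adj u v ↔ ∃ i j j', j ≠ j' ∧ (u : ℝ) = p i j ∧ (v : ℝ) = p i j') :
    G.IsKernelGraph fun x => ⌊(x : ℝ)⌋ := by
  subst hP
  intro u v
  rw [hG]
  constructor
  · rintro ⟨i, j, j', hjj', hu, hv⟩
    refine ⟨fun huv => hjj' (hinj i ?_), ?_⟩
    · rw [← hu, ← hv, huv]
    · simp only [hu, hv, hfloor]
  · rintro ⟨huv, hij⟩
    obtain ⟨i, j, hu⟩ := u.2
    obtain ⟨i', j', hv⟩ := v.2
    simp only [hu, hv, hfloor] at hij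
    subst hij
    exact ⟨i, j, j', fun hjj' => huv (Subtype.ext (by rw [hu, hv, hjj'])), hu, hv⟩

theorem ncard_setOf_floor_eq (i : ℤ) : {x : P | ⌊(x : ℝ)⌋ = i}.ncard = Nat.card ι := by
  let q : ι → P := fun j => ⟨p i j, hP ▸ ⟨i, j, rfl⟩⟩
  have hrange : Set.range q = {x : P | ⌊(x : ℝ)⌋ = i} := by
    ext x
    obtain ⟨i', j, hx⟩ : (x : ℝ) ∈ {x : ℝ | ∃ i j, x = p i j} := hP ▸ x.2
    simp only [Set.mem_range, Set.mem_ofPred_eq, hx, hfloor, q, Subtype.ext_iff]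
    constructor
    · rintro ⟨k, hk⟩
      rw [← hfloor i' j, ← hk, hfloor]
    · rintro rfl
      exact ⟨j, rfl⟩
  rw [← hrange, Set.ncard_range_of_injective fun j j' h => hinj i (congrArg Subtype.val h)]

end Blocks

/-- Example 4: if `p i j ∈ [i, i + 1/3]` for `i ∈ ℤ`, `j ∈ {1,2,3}`, with the three points
`p i 1, p i 2, p i 3` pairwise distinct, `P = {p i j}`, and `G` is the graph on `P` whose edges
are exactly the pairs `{p i j, p i j'}` with `j ≠ j'` (each triple forms a triangle), then `G`
is a 2-regular stable multi-matching whose components all have exactly `3` vertices. -/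
theorem triangle_example
    (p : ℤ → Fin 3 → ℝ) (hp : ∀ (i : ℤ) (j : Fin 3), p i j ∈ Set.Icc (i : ℝ) ((i : ℝ) + 1 / 3))
    (hdist : ∀ (i : ℤ) (j j' : Fin 3), j ≠ j' → p i j ≠ p i j')
    (P : Set ℝ) (hP : P = {x : ℝ | ∃ (i : ℤ) (j : Fin 3), x = p i j})
    (G : SimpleGraph P)
    (hG : ∀ u v : P, G.Adj u v ↔ ∃ (i : ℤ) (j j' : Fin 3),
      j ≠ j' ∧ (u : ℝ) = p i j ∧ (v : ℝ) = p i j') :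
    IsStableMultiMatching P G ∧ (∀ x : P, {y : P | G.Adj x y}.ncard = 2) ∧
      (∀ x : P, {y : P | G.Reachable x y}.ncard = 3) := by
  have hfloor (i : ℤ) (j : Fin 3) : ⌊p i j⌋ = i :=
    Int.floor_eq_iff.mpr ⟨(hp i j).1, by linarith [(hp i j).2]⟩
  have hinj (i : ℤ) : (p i).Injective := fun j j' h => by_contra fun hjj' => hdist i j j' hjj' h
  have hkernel := isKernelGraph_floor_of_adj_iff hfloor hinj hP hG
  have htriple (x : P) : {y : P | ⌊(y : ℝ)⌋ = ⌊(x : ℝ)⌋}.ncard = 3 := by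
    simpa using ncard_setOf_floor_eq hfloor hinj hP ⌊(x : ℝ)⌋
  refine ⟨isStableMultiMatching_of_isKernelGraph_floor hkernel fun x hx => ?_, fun x => ?_,
    fun x => ?_⟩
  · obtain ⟨i, j, rfl⟩ := hP ▸ hx
    rw [Int.fract, hfloor]
    linarith [(hp i j).2]
  · have hx : x ∈ {y : P | ⌊(y : ℝ)⌋ = ⌊(x : ℝ)⌋} := rfl
    rw [hkernel.setOf_adj_eq, Set.ncard_sdiff_singleton_of_mem hx, htriple]
  · simp only [hkernel.reachable_iff, eq_comm (a := ⌊(x : ℝ)⌋), htriple]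
end

section
/- Define $f : [0,1] \to \mathbb{R}$ by $f(p) = p^9 + 9 p^8 (1 - p)$. Then for every $p$ with $0.968 < p < 1$, we have $f(p) > p$. -/
/-!
Writing `f p - p = p (1 - p) (8 p ^ 7 - (1 + p + ⋯ + p ^ 6))`, it suffices that
`p⁻¹ + p⁻² + ⋯ + p⁻⁷ < 8`. The left side decreases in `p`, and at `p = 0.968 = 121/125` it is
already below `8`, if only barely.
-/

open Finset

theorem pow_add_two_add_mul_pow_mul_one_sub_sub_self {R : Type*} [CommRing R] (p : R) (n : ℕ) :
    p ^ (n + 2) + (n + 2) * p ^ (n + 1) * (1 - p) - p =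
      p * (1 - p) * ((n + 1) * p ^ n - ∑ k ∈ range n, p ^ k) := by
  linear_combination p * mul_neg_geom_sum p n

theorem geom_sum_eq_pow_mul_sum_inv_pow {K : Type*} [Field K] {p : K} (hp : p ≠ 0) (n : ℕ) :
    ∑ k ∈ range n, p ^ k = p ^ n * ∑ k ∈ range n, p⁻¹ ^ (k + 1) := by
  rw [mul_sum, ← sum_range_reflect]
  refine sum_congr rfl fun k hk => ?_
  have hkn : n - 1 - k + (k + 1) = n := by have := mem_range.mp hk; omega
  conv_rhs => rw [← hkn]
  rw [pow_add, mul_assoc, ← mul_pow, mul_inv_cancel₀ hp, one_pow, mul_one]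

theorem geom_sum_lt_mul_pow_of_le {c p : ℝ} (hc : 0 < c) (hcp : c ≤ p) {n : ℕ}
    (hsum : ∑ k ∈ range n, c⁻¹ ^ (k + 1) < n + 1) :
    ∑ k ∈ range n, p ^ k < (n + 1) * p ^ n := by
  have hp : 0 < p := hc.trans_le hcp
  have hinv : p⁻¹ ≤ c⁻¹ := inv_anti₀ hc hcp
  rw [geom_sum_eq_pow_mul_sum_inv_pow hp.ne', mul_comm]
  refine mul_lt_mul_of_pos_right (lt_of_le_of_lt ?_ hsum) (pow_pos hp n)
  gcongr

/-- The function `f(p) = p⁹ + 9p⁸(1-p)` (the probability that a `Binomial(9,p)` variable is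
at least 8) satisfies `f(p) > p` for all `p ∈ (0.968, 1)`. -/
theorem f_gt_p (f : ℝ → ℝ) (hf : ∀ p : ℝ, f p = p ^ 9 + 9 * p ^ 8 * (1 - p)) :
    ∀ p : ℝ, 0.968 < p → p < 1 → p < f p := by
  intro p hp hp1
  have hgeom : ∑ k ∈ range 7, p ^ k < (7 + 1) * p ^ 7 :=
    geom_sum_lt_mul_pow_of_le (c := 121 / 125) (by norm_num) (by linarith)
      (by norm_num [sum_range_succ])
  have hp0 : 0 < p := by linarith
  rw [hf, ← sub_pos]
  calc 0 < p * (1 - p) * ((7 + 1) * p ^ 7 - ∑ k ∈ range 7, p ^ k) :=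
        mul_pos (mul_pos hp0 (sub_pos.2 hp1)) (sub_pos.2 hgeom)
    _ = p ^ 9 + 9 * p ^ 8 * (1 - p) - p := by
        linear_combination -pow_add_two_add_mul_pow_mul_one_sub_sub_self p 7
end
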